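/- arXiv:1105.0405 — 3 statements merged into one kernel-verified Lean document; each statement's English description precedes it below -/
import Mathlib

section
/- Let X be a planar Peano continuum with basepoint x₀. If H₁ and H₂ are pseudo-Hawaiian earring subgroups of π₁(X,x₀) having a common wedge point x, then H₁ ∼ H₂ (H₁ is similar to H₂). -/
open CategoryTheory unitInterval
open scoped FundamentalGroupoid

noncomputable section

attribute [local instance] Path.Homotopic.setoid

/-- The Hawaiian earring: union of circles of radius 1/(n+1) centered at (0, 1/(n+1)). -/
def HawaiianEarring : Set ℂ :=
  ⋃ n : ℕ, Metric.sphere (Complex.I / (n + 1)) (1 / (n + 1))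

/-- The basepoint 0 of the Hawaiian earring. -/
def heBase : HawaiianEarring :=
  ⟨0, Set.mem_iUnion.mpr ⟨0, by simp [Complex.dist_eq]⟩⟩

/-- A Peano continuum structure on a subset of the plane. -/
structure IsPeanoContinuum (X : Set ℂ) : Prop where
  nonempty : X.Nonempty
  isCompact : IsCompact X
  isConnected : IsConnected X
  locPathConnected : LocPathConnectedSpace X

/-- The Hawaiian earring group. -/
abbrev HEGroup : Type := FundamentalGroup HawaiianEarring heBase

/-- The functor on fundamental groupoids induced by a continuous map. -/
def inducedFunctor {X Y : Type} [TopologicalSpace X] [TopologicalSpace Y] (f : C(X, Y)) :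
    FundamentalGroupoid X ⥤ FundamentalGroupoid Y where
  obj x := ⟨f x.as⟩
  map {x y} p := by exact Path.Homotopic.Quotient.map p f
  map_id _ := rfl
  map_comp {x y z} p q := by
    refine Quotient.inductionOn₂ p q fun a b => ?_
    change (⟦(a.trans b).map f.continuous⟧ : Path.Homotopic.Quotient _ _) =
      ⟦(a.map f.continuous).trans (b.map f.continuous)⟧
    rw [Path.map_trans]

/-- The homomorphism on fundamental groups induced by a continuous map. -/
def inducedHom {X Y : Type} [TopologicalSpace X] [TopologicalSpace Y] (f : C(X, Y)) (x : X) :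
    FundamentalGroup X x →* FundamentalGroup Y (f x) :=
  Functor.mapEnd (FundamentalGroupoid.mk x) (inducedFunctor f)

/-- Change of basepoint along a path: `[g] ↦ [ᾱ * g * α]`. -/
def pathConj {X : Type} [TopologicalSpace X] {a b : X} (α : Path a b) :
    FundamentalGroup X a →* FundamentalGroup X b :=
  (FundamentalGroup.fundamentalGroupMulEquivOfPath α).toMonoidHom

/-- The element of the fundamental group determined by a loop. -/
def loopClass {X : Type} [TopologicalSpace X] {x : X} (γ : Path x x) :
    FundamentalGroup X x :=
  ⟦γ⟧

/-- `X` is semilocally simply connected at `x`. -/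
def SemilocallySimplyConnectedAt (X : Type) [TopologicalSpace X] (x : X) : Prop :=
  ∃ U ∈ nhds x, ∀ γ : Path x x, (∀ t, γ t ∈ U) → γ.Homotopic (Path.refl x)

/-- The bad set of `X`: points where `X` is not semilocally simply connected. -/
def badSet (X : Set ℂ) : Set X :=
  {x | ¬ SemilocallySimplyConnectedAt X x}

/-- A pseudo-Hawaiian earring subgroup: an uncountable homomorphic image of `ℍ`. -/
def IsPseudoHE {X : Set ℂ} (x₀ : X) (H : Subgroup (FundamentalGroup X x₀)) : Prop :=
  ¬ (H : Set (FundamentalGroup X x₀)).Countable ∧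
    ∃ ψ : HEGroup →* FundamentalGroup X x₀, ψ.range = H

/-- `x` is a wedge point of the subgroup `H` of `π₁(X, x₀)`. -/
def IsWedgePoint {X : Set ℂ} (x₀ : X) (H : Subgroup (FundamentalGroup X x₀)) (x : X) : Prop :=
  ∃ (f : C(HawaiianEarring, X)) (_ : f heBase = x) (α : Path (f heBase) x₀),
    ((pathConj α).comp (inducedHom f heBase)).range = H

/-- Similarity of pseudo-Hawaiian earring subgroups. -/
def SimilarPHE {X : Set ℂ} (x₀ : X) (H₁ H₂ : Subgroup (FundamentalGroup X x₀)) : Prop :=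
  ∃ (g : FundamentalGroup X x₀) (H : Subgroup (FundamentalGroup X x₀)),
    IsPseudoHE x₀ H ∧ H₁ ≤ H ∧ ∀ h ∈ H₂, g * h * g⁻¹ ∈ H

/-- `x` is a `φ`-bad point. -/
def IsPhiBad {X Y : Set ℂ} {x₀ : X} {y₀ : Y}
    (φ : FundamentalGroup X x₀ →* FundamentalGroup Y y₀) (x : X) : Prop :=
  ∀ ε > 0, ∃ γ : Path x x, (∀ t, dist ((γ t : ℂ)) ((x : ℂ)) < ε) ∧
    ∃ α : Path x₀ x, φ (pathConj α.symm (loopClass γ)) ≠ 1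

/-- The canonical loop traversing the `n`-th circle of the Hawaiian earring. -/
def heLoop (n : ℕ) : Path heBase heBase where
  toFun t := ⟨Complex.I / (n + 1) - Complex.I / (n + 1) *
      Complex.exp ((2 * Real.pi * t : ℝ) * Complex.I),
    Set.mem_iUnion.mpr ⟨n, by
      simp only [Metric.mem_sphere, Complex.dist_eq]
      rw [sub_sub_cancel_left, norm_neg, norm_mul, Complex.norm_exp_ofReal_mul_I, mul_one,
        norm_div, Complex.norm_I]
      norm_num
      exact_mod_cast Complex.norm_natCast (n + 1)⟩⟩
  continuous_toFun := by
    apply Continuous.subtype_mk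
    fun_prop
  source' := by
    apply Subtype.ext
    simp [heBase]
  target' := by
    apply Subtype.ext
    simp [heBase, Complex.exp_two_pi_mul_I]

/-- The canonical generators of the Hawaiian earring group. -/
def heGen (n : ℕ) : HEGroup := loopClass (heLoop n)

/-- `H` is generated, in the sense of infinite products, by the sequence `g`. -/
def InfGenBy {X : Set ℂ} {x₀ : X} (g : ℕ → FundamentalGroup X x₀)
    (H : Subgroup (FundamentalGroup X x₀)) : Prop :=
  ∃ ψ : HEGroup →* FundamentalGroup X x₀, ψ.range = H ∧ ∀ i, ψ (heGen i) = g i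

/-- Convergence of a sequence of similarity classes of pseudo-Hawaiian earring subgroups,
represented by subgroups `Hseq n` and `Hlim`. -/
def SimilarClassConverges {X : Set ℂ} (x₀ : X) (Hseq : ℕ → Subgroup (FundamentalGroup X x₀))
    (Hlim : Subgroup (FundamentalGroup X x₀)) : Prop :=
  ∃ (g : ℕ → ℕ → FundamentalGroup X x₀) (M : ℕ → ℕ),
    (∀ n, ∃ H', InfGenBy (g n) H' ∧ IsPseudoHE x₀ H' ∧ SimilarPHE x₀ H' (Hseq n)) ∧
    ∀ k : ℕ → ℕ, (∀ n, M n < k n) →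
      ∃ H', InfGenBy (fun n => g n (k n)) H' ∧ IsPseudoHE x₀ H' ∧ SimilarPHE x₀ H' Hlim


/-! The `n`-th circle of the earring is the level set `height = n + 1` of
`height z = 2 Im z / |z|²`, and multiplying `z` by a positive real `t` divides its height by `t`.
Radial rescalings therefore give self-maps `toEven`, `toOdd` of the earring sending the `n`-th
circle onto the `2n`-th, resp. `(2n+1)`-th, circle, whose images meet only at the basepoint.
Two maps `f₁, f₂` of the earring with the common value `x` at the basepoint thus glue to one map
`G` with `G ∘ toEven = f₁` and `G ∘ toOdd = f₂`. Both wedge subgroups then lie in the image of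
`G_*` (the second up to conjugation by the loop comparing the two paths to `x₀`), and this image
is uncountable because it contains `H₁`. -/

open Complex

namespace HawaiianEarring

variable {z : ℂ} {r s : ℝ} {f g : ℝ → ℝ}

def height (z : ℂ) : ℝ := 2 * z.im / normSq z

def circleHeights : Set ℝ := Set.range fun n : ℕ => (n : ℝ) + 1

@[simp] lemma coe_heBase : (heBase : ℂ) = 0 := rfl

@[simp] lemma height_zero : height 0 = 0 := by simp [height]

lemma height_ofReal_mul (t : ℝ) (z : ℂ) : height (t * z) = height z / t := by
  rcases eq_or_ne t 0 with rfl | ht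
  · simp
  rcases eq_or_ne z 0 with rfl | hz
  · simp
  have := normSq_pos.mpr hz
  simp only [height, normSq_mul, normSq_ofReal, mul_im, ofReal_re, ofReal_im, zero_mul, add_zero]
  field_simp

lemma continuousAt_height (hz : z ≠ 0) : ContinuousAt height z :=
  ((continuous_const.mul continuous_im).continuousAt).div continuous_normSq.continuousAt
    (normSq_pos.mpr hz).ne'

lemma mem_sphere_iff {c : ℝ} (hc : 0 < c) :
    z ∈ Metric.sphere (Complex.I / c) (1 / c) ↔ c * normSq z = 2 * z.im := by
  have hnormSq : normSq (z - Complex.I / c) = normSq z - 2 * z.im / c + 1 / c ^ 2 := by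
    simp only [normSq_apply, sub_re, sub_im, div_ofReal_re, div_ofReal_im, I_re, I_im]
    field_simp
    ring
  rw [mem_sphere_iff_norm, ← sq_eq_sq₀ (norm_nonneg _) (by positivity), Complex.sq_norm, hnormSq,
    div_pow, one_pow, add_eq_right, sub_eq_zero, eq_div_iff hc.ne', mul_comm]

lemma mem_iff : z ∈ HawaiianEarring ↔ z = 0 ∨ height z ∈ circleHeights := by
  rcases eq_or_ne z 0 with rfl | hz
  · simp only [true_or, iff_true]
    exact Set.mem_iUnion.mpr ⟨0, by simp⟩
  have hN := normSq_pos.mpr hz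
  simp only [HawaiianEarring, Set.mem_iUnion, hz, false_or, circleHeights, Set.mem_range]
  refine exists_congr fun n => ?_
  rw [show ((n : ℂ) + 1) = ((n + 1 : ℝ) : ℂ) by push_cast; ring, mem_sphere_iff (by positivity),
    height, eq_div_iff hN.ne']

lemma one_le_of_mem_circleHeights (hr : r ∈ circleHeights) : 1 ≤ r := by
  obtain ⟨n, rfl⟩ := hr
  simp

lemma pos_of_mem_circleHeights (hr : r ∈ circleHeights) : 0 < r :=
  one_pos.trans_le (one_le_of_mem_circleHeights hr)

lemma add_half_ne_of_mem_circleHeights (hr : r ∈ circleHeights) (hs : s ∈ circleHeights) :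
    r + 1 / 2 ≠ s := by
  obtain ⟨m, rfl⟩ := hr
  obtain ⟨n, rfl⟩ := hs
  intro h
  have : ((2 * m + 1 : ℕ) : ℝ) = ((2 * n : ℕ) : ℝ) := by push_cast; linarith
  have := Nat.cast_injective this
  omega

lemma half_mem_or_add_one_half_mem (hr : r ∈ circleHeights) :
    r / 2 ∈ circleHeights ∨ (r + 1) / 2 ∈ circleHeights := by
  obtain ⟨n, rfl⟩ := hr
  obtain ⟨k, rfl | rfl⟩ := Nat.even_or_odd' n
  · exact .inr ⟨k, by push_cast; ring⟩
  · exact .inl ⟨k, by push_cast; ring⟩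

lemma isClosed_circleHeights : IsClosed circleHeights := by
  have : circleHeights = (Homeomorph.addRight (1 : ℝ)) '' Set.range ((↑) : ℕ → ℝ) := by
    simp [circleHeights, ← Set.range_comp, Function.comp_def]
  rw [this]
  exact (Homeomorph.addRight _).isClosedMap _ Nat.isClosedEmbedding_coe_real.isClosed_range

lemma height_mem_circleHeights (hz : z ∈ HawaiianEarring) (h0 : z ≠ 0) :
    height z ∈ circleHeights :=
  (mem_iff.mp hz).resolve_left h0

lemma isClosed : IsClosed HawaiianEarring := by
  refine isOpen_compl_iff.mp (isOpen_iff_mem_nhds.mpr fun z hz => ?_)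
  have hz0 : z ≠ 0 := fun h => hz (mem_iff.mpr (.inl h))
  have hheight : height z ∉ circleHeights := fun h => hz (mem_iff.mpr (.inr h))
  filter_upwards [eventually_ne_nhds hz0, (continuousAt_height hz0).eventually
    (isClosed_circleHeights.isOpen_compl.mem_nhds hheight)] with w hw0 hw hwE
  exact hw (height_mem_circleHeights hwE hw0)

def reindex (g : ℝ → ℝ) (z : ℂ) : ℂ := ((height z / g (height z) : ℝ) : ℂ) * z

@[simp] lemma reindex_zero : reindex g 0 = 0 := by simp [reindex]

lemma height_reindex (hz : height z ≠ 0) : height (reindex g z) = g (height z) := by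
  rw [reindex, height_ofReal_mul, div_div_cancel₀ hz]

lemma reindex_ne_zero (hz : z ≠ 0) (hh : height z ≠ 0) (hg : g (height z) ≠ 0) :
    reindex g z ≠ 0 := by
  simp [reindex, hz, hh, hg]

lemma reindex_mem_iff (hz : z ∈ HawaiianEarring) (h0 : z ≠ 0) (hg : g (height z) ≠ 0) :
    reindex g z ∈ HawaiianEarring ↔ g (height z) ∈ circleHeights := by
  have hh : height z ≠ 0 := (pos_of_mem_circleHeights (height_mem_circleHeights hz h0)).ne'
  rw [mem_iff, height_reindex hh]
  simp [reindex_ne_zero h0 hh hg]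

lemma reindex_mem (hz : z ∈ HawaiianEarring) (hg : ∀ r ∈ circleHeights, g r ∈ circleHeights) :
    reindex g z ∈ HawaiianEarring := by
  rcases eq_or_ne z 0 with rfl | h0
  · simpa using hz
  have hr := hg _ (height_mem_circleHeights hz h0)
  exact (reindex_mem_iff hz h0 (pos_of_mem_circleHeights hr).ne').mpr hr

lemma reindex_reindex (hz : height z ≠ 0) (hg : g (height z) ≠ 0)
    (hfg : f (g (height z)) = height z) : reindex f (reindex g z) = z := by
  rw [reindex, height_reindex hz, hfg, reindex, ← mul_assoc, ← ofReal_mul]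
  field_simp
  simp

lemma norm_reindex_le {C : ℝ} (hgC : ∀ r, 1 ≤ r → 0 < g r ∧ r ≤ C * g r)
    (hz : z ∈ HawaiianEarring) : ‖reindex g z‖ ≤ C * ‖z‖ := by
  rcases eq_or_ne z 0 with rfl | h0
  · simp
  have hr := height_mem_circleHeights hz h0
  obtain ⟨hpos, hle⟩ := hgC _ (one_le_of_mem_circleHeights hr)
  rw [reindex, norm_mul, norm_real,
    Real.norm_of_nonneg (div_nonneg (pos_of_mem_circleHeights hr).le hpos.le)]
  gcongr
  rwa [div_le_iff₀ hpos]

lemma continuousOn_reindex (hg : Continuous g) {C : ℝ}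
    (hgC : ∀ r, 1 ≤ r → 0 < g r ∧ r ≤ C * g r) :
    ContinuousOn (reindex g) HawaiianEarring := by
  intro z hz
  rcases eq_or_ne z 0 with rfl | h0
  · rw [ContinuousWithinAt, reindex_zero]
    refine squeeze_zero_norm'
      (eventually_nhdsWithin_of_forall fun w hw => norm_reindex_le hgC hw) ?_
    have hC : Continuous fun w : ℂ => C * ‖w‖ := by fun_prop
    simpa using (hC.tendsto 0).mono_left nhdsWithin_le_nhds
  · have hpos := (hgC _ (one_le_of_mem_circleHeights (height_mem_circleHeights hz h0))).1
    exact ((continuous_ofReal.continuousAt.comp ((continuousAt_height h0).div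
      (hg.continuousAt.comp (continuousAt_height h0)) hpos.ne')).mul
        continuousAt_id).continuousWithinAt

def toEven : C(HawaiianEarring, HawaiianEarring) where
  toFun z := ⟨reindex (fun r => 2 * r - 1) z, reindex_mem z.2 fun r ⟨n, hn⟩ => ⟨2 * n, by
    rw [← hn]; push_cast; ring⟩⟩
  continuous_toFun := ((continuousOn_reindex (C := 1) (by fun_prop) fun r hr =>
    ⟨by linarith, by linarith⟩).comp_continuous continuous_subtype_val Subtype.prop).subtype_mk _

def toOdd : C(HawaiianEarring, HawaiianEarring) where
  toFun z := ⟨reindex (fun r => 2 * r) z, reindex_mem z.2 fun r ⟨n, hn⟩ => ⟨2 * n + 1, by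
    rw [← hn]; push_cast; ring⟩⟩
  continuous_toFun := ((continuousOn_reindex (C := 1) (by fun_prop) fun r hr =>
    ⟨by linarith, by linarith⟩).comp_continuous continuous_subtype_val Subtype.prop).subtype_mk _

lemma coe_toEven (z : HawaiianEarring) : (toEven z : ℂ) = reindex (fun r => 2 * r - 1) z := rfl

lemma coe_toOdd (z : HawaiianEarring) : (toOdd z : ℂ) = reindex (fun r => 2 * r) z := rfl

def ofEven : ℂ → ℂ := reindex fun r => (r + 1) / 2

def ofOdd : ℂ → ℂ := reindex fun r => r / 2

lemma continuousOn_ofEven : ContinuousOn ofEven HawaiianEarring :=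
  continuousOn_reindex (C := 2) (by fun_prop) fun r hr => ⟨by linarith, by linarith⟩

lemma continuousOn_ofOdd : ContinuousOn ofOdd HawaiianEarring :=
  continuousOn_reindex (C := 2) (by fun_prop) fun r hr => ⟨by linarith, by linarith⟩

@[simp] lemma toEven_heBase : toEven heBase = heBase := Subtype.ext (by simp [coe_toEven])

@[simp] lemma toOdd_heBase : toOdd heBase = heBase := Subtype.ext (by simp [coe_toOdd])

lemma ofEven_toEven (z : HawaiianEarring) : ofEven (toEven z) = z := by
  rcases eq_or_ne (z : ℂ) 0 with h0 | h0
  · simp [coe_toEven, ofEven, h0]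
  have hr := height_mem_circleHeights z.2 h0
  have := one_le_of_mem_circleHeights hr
  rw [coe_toEven, ofEven]
  exact reindex_reindex (pos_of_mem_circleHeights hr).ne' (by linarith) (by ring)

lemma ofOdd_toOdd (z : HawaiianEarring) : ofOdd (toOdd z) = z := by
  rcases eq_or_ne (z : ℂ) 0 with h0 | h0
  · simp [coe_toOdd, ofOdd, h0]
  have hr := pos_of_mem_circleHeights (height_mem_circleHeights z.2 h0)
  rw [coe_toOdd, ofOdd]
  exact reindex_reindex hr.ne' (by positivity) (by ring)

lemma ofEven_mem_of_ofOdd_notMem (hz : z ∈ HawaiianEarring)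
    (hodd : ofOdd z ∉ HawaiianEarring) : ofEven z ∈ HawaiianEarring := by
  rcases eq_or_ne z 0 with rfl | h0
  · simpa [ofEven] using hz
  have hr := height_mem_circleHeights hz h0
  have := pos_of_mem_circleHeights hr
  rw [ofOdd, reindex_mem_iff hz h0 (by positivity)] at hodd
  rw [ofEven, reindex_mem_iff hz h0 (by positivity)]
  exact (half_mem_or_add_one_half_mem hr).resolve_left hodd

lemma eq_zero_of_ofOdd_mem_of_ofEven_mem (hz : z ∈ HawaiianEarring)
    (hodd : ofOdd z ∈ HawaiianEarring) (heven : ofEven z ∈ HawaiianEarring) : z = 0 := by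
  by_contra h0
  have := pos_of_mem_circleHeights (height_mem_circleHeights hz h0)
  rw [ofOdd, reindex_mem_iff hz h0 (by positivity)] at hodd
  rw [ofEven, reindex_mem_iff hz h0 (by positivity)] at heven
  exact add_half_ne_of_mem_circleHeights hodd heven (by ring)

lemma continuousOn_of_eq_comp {Y : Type*} [TopologicalSpace Y] {p : ℂ → ℂ}
    (hp : ContinuousOn p HawaiianEarring) (f : C(HawaiianEarring, Y)) {G : HawaiianEarring → Y}
    (hG : ∀ (w : HawaiianEarring) (hw : p w ∈ HawaiianEarring), G w = f ⟨p w, hw⟩) :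
    ContinuousOn G {w | p w ∈ HawaiianEarring} := by
  rw [continuousOn_iff_continuous_domRestrict, show Set.domRestrict _ G =
    fun w : {w : HawaiianEarring | p w ∈ HawaiianEarring} => f ⟨p w, w.2⟩ from
      funext fun w => hG w w.2]
  exact f.continuous.comp ((hp.comp_continuous (continuous_subtype_val.comp continuous_subtype_val)
    fun w => w.1.2).subtype_mk _)

theorem exists_comp_toEven_eq_and_comp_toOdd_eq {Y : Type*} [TopologicalSpace Y]
    (f₁ f₂ : C(HawaiianEarring, Y)) (h : f₁ heBase = f₂ heBase) :
    ∃ G : C(HawaiianEarring, Y), G.comp toEven = f₁ ∧ G.comp toOdd = f₂ := by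
  classical
  let oddPart : Set HawaiianEarring := {w | ofOdd w ∈ HawaiianEarring}
  let evenPart : Set HawaiianEarring := {w | ofEven w ∈ HawaiianEarring}
  have hcover (w) (hw : w ∉ oddPart) : w ∈ evenPart := ofEven_mem_of_ofOdd_notMem w.2 hw
  let G : HawaiianEarring → Y := fun w =>
    if hw : w ∈ oddPart then f₂ ⟨ofOdd w, hw⟩ else f₁ ⟨ofEven w, hcover w hw⟩
  have hG_odd (w) (hw : w ∈ oddPart) : G w = f₂ ⟨ofOdd w, hw⟩ := dif_pos hw
  have hG_even (w) (hw : w ∈ evenPart) : G w = f₁ ⟨ofEven w, hw⟩ := by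
    by_cases hodd : w ∈ oddPart
    · obtain rfl : w = heBase := Subtype.ext (eq_zero_of_ofOdd_mem_of_ofEven_mem w.2 hodd hw)
      rw [hG_odd _ hodd]
      convert h.symm using 2 <;> exact Subtype.ext (by simp [ofOdd, ofEven])
    · exact dif_neg hodd
  have hodd_closed : IsClosed oddPart :=
    isClosed.preimage (continuousOn_ofOdd.comp_continuous continuous_subtype_val Subtype.prop)
  have heven_closed : IsClosed evenPart :=
    isClosed.preimage (continuousOn_ofEven.comp_continuous continuous_subtype_val Subtype.prop)
  have hunion : oddPart ∪ evenPart = Set.univ :=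
    Set.eq_univ_of_forall fun w => (em (w ∈ oddPart)).imp_right (hcover w)
  have hG : Continuous G := by
    rw [← continuousOn_univ, ← hunion]
    exact (continuousOn_of_eq_comp continuousOn_ofOdd f₂ hG_odd).union_of_isClosed
      (continuousOn_of_eq_comp continuousOn_ofEven f₁ hG_even) hodd_closed heven_closed
  refine ⟨⟨G, hG⟩, ContinuousMap.ext fun z => ?_, ContinuousMap.ext fun z => ?_⟩
  · have hz : ofEven (toEven z) ∈ HawaiianEarring := by rw [ofEven_toEven]; exact z.2
    exact (hG_even _ hz).trans (congrArg f₁ (Subtype.ext (ofEven_toEven z)))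
  · have hz : ofOdd (toOdd z) ∈ HawaiianEarring := by rw [ofOdd_toOdd]; exact z.2
    exact (hG_odd _ hz).trans (congrArg f₂ (Subtype.ext (ofOdd_toOdd z)))

end HawaiianEarring

section FundamentalGroup

variable {A B Y : Type} [TopologicalSpace A] [TopologicalSpace B] [TopologicalSpace Y]

theorem pathConj_eq_mul_pathConj_mul_inv {a y : Y} (α β : Path a y)
    (q : FundamentalGroup Y a) : pathConj β q =
       loopClass (α.symm.trans β) * pathConj α q * (loopClass (α.symm.trans β))⁻¹ := by
  have hloop : loopClass (α.symm.trans β) =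
      (Groupoid.inv (⟦α⟧ : FundamentalGroupoid.mk a ⟶ FundamentalGroupoid.mk y) ≫ ⟦β⟧) := rfl
  have hinv (u : FundamentalGroup Y y) : u⁻¹ = Groupoid.inv u := rfl
  simp only [pathConj, MulEquiv.toMonoidHom_eq_coe, MonoidHom.coe_coe,
    FundamentalGroup.fundamentalGroupMulEquivOfPath, Iso.conj_apply, hloop, hinv, End.mul_def]
  simp [Groupoid.inv_eq_inv]

theorem inducedHom_comp (f : C(A, Y)) (e : C(B, A)) (b : B) :
    inducedHom (f.comp e) b = (inducedHom f (e b)).comp (inducedHom e b) := by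
  ext q
  obtain ⟨γ, rfl⟩ := Quotient.exists_rep (q : Path.Homotopic.Quotient b b)
  rfl

theorem range_pathConj_comp_inducedHom_comp_le (f : C(A, Y)) (e : C(B, A)) {b : B} {a : A}
    (h : e b = a) {y : Y} (α : Path (f (e b)) y) :
    ((pathConj α).comp (inducedHom (f.comp e) b)).range ≤
      ((pathConj (α.cast (congrArg f h.symm) rfl)).comp (inducedHom f a)).range := by
  subst h
  rw [inducedHom_comp, ← MonoidHom.comp_assoc, Path.cast_rfl_rfl, MonoidHom.range_comp]
  exact Subgroup.map_le_range _ _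

end FundamentalGroup

theorem similar_of_common_wedge_point_general
    (X : Set ℂ) (x₀ : X)
    (H₁ H₂ : Subgroup (FundamentalGroup X x₀))
    (h₁ : IsPseudoHE x₀ H₁)
    (x : X) (hx₁ : IsWedgePoint x₀ H₁ x) (hx₂ : IsWedgePoint x₀ H₂ x) :
    SimilarPHE x₀ H₁ H₂ := by
  obtain ⟨f₁, rfl, α₁, rfl⟩ := hx₁
  obtain ⟨f₂, hf, α₂, rfl⟩ := hx₂
  obtain ⟨G, rfl, rfl⟩ := HawaiianEarring.exists_comp_toEven_eq_and_comp_toOdd_eq f₁ f₂ hf.symm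
  have hH₁ := range_pathConj_comp_inducedHom_comp_le G _ HawaiianEarring.toEven_heBase α₁
  have hH₂ := range_pathConj_comp_inducedHom_comp_le G _ HawaiianEarring.toOdd_heBase α₂
  set β₁ := α₁.cast (congrArg G HawaiianEarring.toEven_heBase.symm) rfl
  set β₂ := α₂.cast (congrArg G HawaiianEarring.toOdd_heBase.symm) rfl
  set ψ := (pathConj β₁).comp (inducedHom G heBase)
  refine ⟨(loopClass (β₁.symm.trans β₂))⁻¹, ψ.range, ⟨fun hc => h₁.1 (hc.mono hH₁), ψ, rfl⟩,
    hH₁, fun _ hq => ?_⟩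
  obtain ⟨q, rfl⟩ := hH₂ hq
  refine ⟨q, ?_⟩
  simp only [MonoidHom.comp_apply, pathConj_eq_mul_pathConj_mul_inv β₁ β₂, ψ]
  group

/-- Lemma `ifwedge`: two pseudo-Hawaiian earring subgroups with a common wedge point are
similar. -/
theorem similar_of_common_wedge_point
    (X : Set ℂ) (hX : IsPeanoContinuum X) (x₀ : X)
    (H₁ H₂ : Subgroup (FundamentalGroup X x₀))
    (h₁ : IsPseudoHE x₀ H₁) (h₂ : IsPseudoHE x₀ H₂)
    (x : X) (hx₁ : IsWedgePoint x₀ H₁ x) (hx₂ : IsWedgePoint x₀ H₂ x) :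
    SimilarPHE x₀ H₁ H₂ :=
  similar_of_common_wedge_point_general X x₀ H₁ H₂ h₁ x hx₁ hx₂
end
end

section
/- Let X and Z be metric spaces and Y a topological space such that X × Y is first-countable. Let H : X × Y → Z be a function, and let (Cᵢ) be a sequence of closed subsets of X with ⋃ᵢ Cᵢ = X and diam(Cᵢ) → 0, such that the restriction of H to Cᵢ × Y is continuous for each i and the sets Dᵢ = H(Cᵢ × Y) satisfy diam(Dᵢ) → 0. Assume that for every point x₀ ∈ X and every subsequence (C_{i_k}) converging to x₀ (meaning sup_{p ∈ C_{i_k}} dist(p, x₀) → 0), there exists z₀ ∈ Z with H(x₀, y) = z₀ for all y ∈ Y and sup_{q ∈ D_{i_k}} dist(q, z₀) → 0. Then H is continuous on X × Y. -/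
/-!
Since `X × Y` is first countable it suffices to show that `H uₙ → H p` whenever `uₙ → p`, and
for this that every subsequence has a further subsequence along which it holds. Pick pieces
`C (Iₙ)` containing the first coordinates of `uₙ`. Either one piece is visited infinitely often,
and then `p` lies in the closed set `C m × Y`, on which `H` is continuous; or the piece indices can
be made strictly increasing, and then the pieces, being null and meeting a sequence converging to
`p.1`, converge to `p.1`, so their images converge to a point `z₀`, which is `H p`.
-/

open Filter Topology

lemma exists_const_subseq_or_strictMono_subseq (I : ℕ → ℕ) :
    (∃ m, ∃ ψ : ℕ → ℕ, StrictMono ψ ∧ ∀ k, I (ψ k) = m) ∨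
      ∃ ψ : ℕ → ℕ, StrictMono ψ ∧ StrictMono (I ∘ ψ) := by
  by_cases h : ∃ m, ∃ᶠ k in atTop, I k = m
  · obtain ⟨m, hm⟩ := h
    exact Or.inl ⟨m, extraction_of_frequently_atTop hm⟩
  · simp only [not_exists, not_frequently] at h
    have hI : Tendsto I atTop cofinite := le_cofinite_iff_eventually_ne.2 h
    rw [Nat.cofinite_eq_atTop] at hI
    exact Or.inr (strictMono_subseq_of_tendsto_atTop hI)

section EMetric

variable {ι α : Type*} [PseudoEMetricSpace α] {l : Filter ι} {s : ι → Set α} {u : ι → α}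

lemma tendsto_iSup_edist_of_tendsto_diam {x : α} (hu : ∀ k, u k ∈ s k)
    (hux : Tendsto u l (𝓝 x)) (hs : Tendsto (fun k => Metric.ediam (s k)) l (𝓝 0)) :
    Tendsto (fun k => ⨆ p ∈ s k, edist p x) l (𝓝 0) := by
  have hbound : Tendsto (fun k => Metric.ediam (s k) + edist (u k) x) l (𝓝 0) := by
    simpa using hs.add (tendsto_iff_edist_tendsto_0.1 hux)
  refine tendsto_of_tendsto_of_tendsto_of_le_of_le tendsto_const_nhds hbound
    (fun _ => zero_le) fun k => iSup₂_le fun p hp => ?_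
  calc edist p x ≤ edist p (u k) + edist (u k) x := edist_triangle _ _ _
    _ ≤ Metric.ediam (s k) + edist (u k) x := by
      gcongr; exact Metric.edist_le_ediam_of_mem hp (hu k)

lemma tendsto_of_mem_of_tendsto_iSup_edist {z : α} (hu : ∀ k, u k ∈ s k)
    (hs : Tendsto (fun k => ⨆ q ∈ s k, edist q z) l (𝓝 0)) :
    Tendsto u l (𝓝 z) :=
  tendsto_iff_edist_tendsto_0.2 <| tendsto_of_tendsto_of_tendsto_of_le_of_le tendsto_const_nhds hs
    (fun _ => zero_le) fun k => le_iSup₂_of_le (u k) (hu k) le_rfl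

end EMetric

lemma ContinuousOn.tendsto_comp_of_isClosed {ι α β : Type*} [TopologicalSpace α]
    [TopologicalSpace β] {f : α → β} {s : Set α} {l : Filter ι} [l.NeBot] {u : ι → α} {x : α}
    (hf : ContinuousOn f s) (hs : IsClosed s) (hu : ∀ᶠ k in l, u k ∈ s)
    (hux : Tendsto u l (𝓝 x)) :
    Tendsto (f ∘ u) l (𝓝 (f x)) :=
  (hf x (hs.mem_of_tendsto hux hu)).tendsto.comp (tendsto_nhdsWithin_iff.2 ⟨hux, hu⟩)

theorem continuous_of_null_cover_general
    {X Y Z : Type*} [MetricSpace X] [TopologicalSpace Y] [MetricSpace Z]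
    [FirstCountableTopology (X × Y)]
    (H : X × Y → Z) (C : ℕ → Set X)
    (hclosed : ∀ i, IsClosed (C i))
    (hcover : ⋃ i, C i = Set.univ)
    (hnull : Tendsto (fun i => EMetric.diam (C i)) atTop (𝓝 0))
    (hcont : ∀ i, ContinuousOn H ((C i) ×ˢ (Set.univ : Set Y)))
    (hlim : ∀ (x₀ : X) (φ : ℕ → ℕ), StrictMono φ →
      Tendsto (fun k => ⨆ p ∈ C (φ k), edist p x₀) atTop (𝓝 0) →
      ∃ z₀ : Z, (∀ y : Y, H (x₀, y) = z₀) ∧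
        Tendsto (fun k => ⨆ q ∈ H '' ((C (φ k)) ×ˢ (Set.univ : Set Y)), edist q z₀)
          atTop (𝓝 0)) :
    Continuous H := by
  refine continuous_iff_seqContinuous.2 fun u p hu => ?_
  choose I hI using fun n => Set.mem_iUnion.1 (hcover.symm ▸ Set.mem_univ (u n).1)
  refine tendsto_of_subseq_tendsto fun ns hns => ?_
  have hsub : ∀ ψ : ℕ → ℕ, StrictMono ψ → Tendsto (u ∘ ns ∘ ψ) atTop (𝓝 p) :=
    fun ψ hψ => hu.comp (hns.comp hψ.tendsto_atTop)
  rcases exists_const_subseq_or_strictMono_subseq (I ∘ ns) with ⟨m, ψ, hψ, hm⟩ | ⟨ψ, hψ, hIψ⟩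
  · refine ⟨ψ, (hcont m).tendsto_comp_of_isClosed ((hclosed m).prod isClosed_univ)
      (Eventually.of_forall fun k => ⟨hm k ▸ hI _, trivial⟩) (hsub ψ hψ)⟩
  · have hmem : ∀ k, (u (ns (ψ k))).1 ∈ C (I (ns (ψ k))) := fun k => hI _
    obtain ⟨z, hz, hD⟩ := hlim p.1 _ hIψ <| tendsto_iSup_edist_of_tendsto_diam hmem
      ((continuous_fst.tendsto p).comp (hsub ψ hψ)) (hnull.comp hIψ.tendsto_atTop)
    refine ⟨ψ, ?_⟩
    rw [show H p = z from hz p.2]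
    exact tendsto_of_mem_of_tendsto_iSup_edist
      (fun k => Set.mem_image_of_mem H (Set.mem_prod.2 ⟨hmem k, Set.mem_univ _⟩)) hD

/-- Lemma (Conner–Meilstrup): a function on a product which is continuous on each piece
`Cᵢ × Y` of a null cover by closed sets, with null images `Dᵢ = H(Cᵢ × Y)`, and such that for
every subsequence of pieces converging to a point `x₀` the corresponding images converge to a
point `z₀` with `H(x₀, ·) ≡ z₀`, is continuous. -/
theorem continuous_of_null_cover
    {X Y Z : Type*} [MetricSpace X] [TopologicalSpace Y] [MetricSpace Z]
    [FirstCountableTopology (X × Y)]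
    (H : X × Y → Z) (C : ℕ → Set X)
    (hclosed : ∀ i, IsClosed (C i))
    (hcover : ⋃ i, C i = Set.univ)
    (hnull : Tendsto (fun i => EMetric.diam (C i)) atTop (𝓝 0))
    (hcont : ∀ i, ContinuousOn H ((C i) ×ˢ (Set.univ : Set Y)))
    (hDnull : Tendsto (fun i => EMetric.diam (H '' ((C i) ×ˢ (Set.univ : Set Y))))
      atTop (𝓝 0))
    (hlim : ∀ (x₀ : X) (φ : ℕ → ℕ), StrictMono φ →
      Tendsto (fun k => ⨆ p ∈ C (φ k), edist p x₀) atTop (𝓝 0) →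
      ∃ z₀ : Z, (∀ y : Y, H (x₀, y) = z₀) ∧
        Tendsto (fun k => ⨆ q ∈ H '' ((C (φ k)) ×ˢ (Set.univ : Set Y)), edist q z₀)
          atTop (𝓝 0)) :
    Continuous H :=
  continuous_of_null_cover_general H C hclosed hcover hnull hcont hlim
end

section
/- Let X be a Peano continuum and (xₙ)_{n ≥ 1} a sequence in X converging to a point x. Then there exists a path T : [0,1] → X with T(0) = x₁, T(1) = x, and T(1 − 1/n) = xₙ for all n ≥ 1. -/
open unitInterval

/-- The point `1 - 1/n` of the unit interval. -/
noncomputable def seqPoint (n : ℕ) : unitInterval :=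
  ⟨1 - 1 / (n : ℝ), by
    constructor
    · simp only [sub_nonneg]
      rcases Nat.eq_zero_or_pos n with h | h
      · simp [h]
      · rw [div_le_one (by exact_mod_cast h)]
        exact_mod_cast h
    · have : (0 : ℝ) ≤ 1 / (n : ℝ) := by positivity
      linarith⟩

/-!
Compactness makes local path-connectedness uniform (Lebesgue number): nearby points are joined
by paths staying near them. As consecutive terms of `u` are eventually close to each other and
to `p`, one can choose paths `γₙ` from `u n` to `u (n + 1)` converging uniformly to the constant
path at `p`. Laying `γₙ` on `[n, n + 1]` gives a map on `[1, ∞)` tending to `p`, and the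
reparametrization `t ↦ (1 - t)⁻¹`, which sends `1 - 1/n` to `n`, turns it into the path.
-/

open Set Filter Topology Metric

theorem exists_seq_mem_tendsto_of_eventually_dist_lt {Y : Type*} [PseudoMetricSpace Y]
    {A : ℕ → Set Y} {q : Y} (hne : ∀ n, (A n).Nonempty)
    (hsmall : ∀ ε > 0, ∀ᶠ n in atTop, ∃ y ∈ A n, dist y q < ε) :
    ∃ y : ℕ → Y, (∀ n, y n ∈ A n) ∧ Tendsto y atTop (𝓝 q) := by
  have hinf : Tendsto (fun n => infDist q (A n)) atTop (𝓝 0) := by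
    refine tendsto_order.2 ⟨fun a ha => .of_forall fun n => ha.trans_le infDist_nonneg,
      fun ε hε => ?_⟩
    filter_upwards [hsmall ε hε] with n ⟨y, hyA, hyq⟩
    exact (infDist_le_dist_of_mem hyA).trans_lt (by rwa [dist_comm])
  have hnear : ∀ n, ∃ y ∈ A n, dist q y < infDist q (A n) + 1 / (n + 1) := fun n =>
    (infDist_lt_iff (hne n)).1 (lt_add_of_pos_right _ Nat.one_div_pos_of_nat)
  choose y hyA hy using hnear
  refine ⟨y, hyA, tendsto_iff_dist_tendsto_zero.2 ?_⟩
  have hbound : Tendsto (fun n : ℕ => infDist q (A n) + 1 / (n + 1)) atTop (𝓝 0) := by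
    simpa using hinf.add tendsto_one_div_add_atTop_nhds_zero_nat
  exact squeeze_zero (fun _ => dist_nonneg) (fun n => (dist_comm _ _).trans_le (hy n).le) hbound

theorem exists_pos_forall_joinedIn_ball {X : Type*} [PseudoMetricSpace X] [CompactSpace X]
    [LocallyPathConnectedSpace X] {ε : ℝ} (hε : 0 < ε) :
    ∃ δ > 0, ∀ x y : X, dist x y < δ → JoinedIn (ball x ε) x y := by
  obtain ⟨δ, hδ, hcover⟩ := lebesgue_number_lemma_of_metric isCompact_univ
    (fun z : X => (isOpen_ball (x := z) (ε := ε / 2)).pathComponentIn z)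
    (fun z _ => mem_iUnion.2 ⟨z, mem_pathComponentIn_self (mem_ball_self (half_pos hε))⟩)
  refine ⟨δ, hδ, fun x y hxy => ?_⟩
  obtain ⟨z, hz⟩ := hcover x (mem_univ x)
  have hx : x ∈ pathComponentIn (ball z (ε / 2)) z := hz (mem_ball_self hδ)
  have hy : y ∈ pathComponentIn (ball z (ε / 2)) z := hz (mem_ball'.2 hxy)
  have hsub : ball z (ε / 2) ⊆ ball x ε := fun w hw => by
    have hxz := mem_ball.1 (pathComponentIn_subset hx)
    rw [mem_ball] at hw ⊢
    linarith [dist_triangle_right w x z]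
  exact ((JoinedIn.symm hx).trans hy).mono hsub

theorem exists_paths_tendsto_const {X : Type*} [PseudoMetricSpace X] [CompactSpace X]
    [LocallyPathConnectedSpace X] [PathConnectedSpace X] {u : ℕ → X} {p : X}
    (hu : Tendsto u atTop (𝓝 p)) :
    ∃ γ : ∀ n, Path (u n) (u (n + 1)),
      Tendsto (fun n => (γ n : C(I, X))) atTop (𝓝 (ContinuousMap.const I p)) := by
  have hsmall : ∀ ε > 0, ∀ᶠ n in atTop,
      ∃ γ : Path (u n) (u (n + 1)), dist (γ : C(I, X)) (ContinuousMap.const I p) < ε := by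
    intro ε hε
    obtain ⟨δ, hδ, hjoin⟩ := exists_pos_forall_joinedIn_ball (X := X) (half_pos hε)
    have hstep : Tendsto (fun n => dist (u n) (u (n + 1))) atTop (𝓝 0) := by
      simpa using hu.dist (hu.comp (tendsto_add_atTop_nat 1))
    filter_upwards [hstep.eventually_lt_const hδ, hu.eventually (ball_mem_nhds p (half_pos hε))]
      with n hnext hnear
    refine ⟨(hjoin _ _ hnext).somePath, ContinuousMap.dist_lt_of_nonempty fun t => ?_⟩
    have hγt := mem_ball.1 ((hjoin _ _ hnext).somePath_mem t)
    have hup := mem_ball.1 hnear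
    show dist ((hjoin _ _ hnext).somePath t) p < ε
    linarith [dist_triangle ((hjoin _ _ hnext).somePath t) (u n) p]
  obtain ⟨c, hc, hlim⟩ := exists_seq_mem_tendsto_of_eventually_dist_lt
    (A := fun n => range fun γ : Path (u n) (u (n + 1)) => (γ : C(I, X)))
    (fun n => ⟨_, mem_range_self (PathConnectedSpace.somePath _ _)⟩)
    fun ε hε => (hsmall ε hε).mono fun n ⟨γ, hγ⟩ => ⟨γ, mem_range_self γ, hγ⟩
  choose γ hγ using hc
  exact ⟨γ, by simpa only [hγ] using hlim⟩

theorem continuousOn_Icc_of_tendsto_atTop {X : Type*} [TopologicalSpace X] {g : ℝ → X} {p : X}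
    (hg : ContinuousOn g (Ici 1)) (hp : Tendsto g atTop (𝓝 p)) :
    ContinuousOn (fun t : ℝ => if t < 1 then g (1 - t)⁻¹ else p) (Icc 0 1) := by
  have hψ : ContinuousOn (fun t : ℝ => g (1 - t)⁻¹) (Ico 0 1) := by
    refine hg.comp (ContinuousOn.inv₀ (by fun_prop) fun t ht => (sub_pos.2 ht.2).ne') ?_
    intro t ⟨_, ht⟩
    exact (one_le_inv₀ (sub_pos.2 ht)).2 (by linarith)
  have hlim : Tendsto (fun t : ℝ => g (1 - t)⁻¹) (𝓝[<] 1) (𝓝 p) := by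
    have hsub : Tendsto (fun t : ℝ => 1 - t) (𝓝[<] 1) (𝓝[>] 0) :=
      tendsto_nhdsWithin_of_tendsto_nhds_of_eventually_within _
        (((continuous_sub_left 1).tendsto' 1 0 (sub_self 1)).mono_left nhdsWithin_le_nhds)
        (eventually_nhdsWithin_of_forall fun t (ht : t < 1) => sub_pos.2 ht)
    exact hp.comp (tendsto_inv_nhdsGT_zero.comp hsub)
  intro t ⟨h0, h1⟩
  rcases h1.lt_or_eq with hlt | rfl
  · have hnhds : Ico 0 1 ∈ 𝓝[Icc 0 1] t :=
      mem_of_superset (inter_mem_nhdsWithin _ (Iio_mem_nhds hlt)) fun s hs => ⟨hs.1.1, hs.2⟩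
    exact (hψ t ⟨h0, hlt⟩).congr (fun s hs => if_pos hs.2) (if_pos hlt)
      |>.mono_of_mem_nhdsWithin hnhds
  · rw [← Ico_insert_right zero_le_one, continuousWithinAt_insert_self, ContinuousWithinAt,
      if_neg (lt_irrefl 1)]
    exact (hlim.mono_left (nhdsWithin_mono _ Ico_subset_Iio_self)).congr'
      (eventually_nhdsWithin_of_forall fun s hs => (if_pos hs.2).symm)

namespace Path

section TopologicalSpace

variable {X : Type*} [TopologicalSpace X] {u : ℕ → X}

noncomputable def concatSeq (γ : ∀ n, Path (u n) (u (n + 1))) (s : ℝ) : X :=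
  (γ ⌊s⌋₊).extend (s - ⌊s⌋₊)

variable (γ : ∀ n, Path (u n) (u (n + 1)))

theorem concatSeq_natCast (n : ℕ) : concatSeq γ n = u n := by
  simp [concatSeq]

theorem eqOn_concatSeq (n : ℕ) :
    EqOn (concatSeq γ) (fun s => (γ n).extend (s - n)) (Icc n (n + 1)) := by
  intro s ⟨hns, hsn⟩
  rcases hsn.lt_or_eq with hlt | hend
  · rw [concatSeq, Nat.floor_eq_on_Ico n s ⟨hns, hlt⟩]
  · have hs : s = ((n + 1 : ℕ) : ℝ) := by push_cast; exact hend
    rw [hs, concatSeq_natCast]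
    simp

theorem continuousOn_concatSeq : ContinuousOn (concatSeq γ) (Ici 0) := by
  have hlf : LocallyFinite fun n : ℕ => Icc (n : ℝ) (n + 1) := by
    simpa [Function.comp_def] using (locallyFinite_Icc_of_tendsto (f := fun k : ℤ => (k : ℝ))
      (g := fun k : ℤ => (k : ℝ) + 1) tendsto_intCast_atTop_atTop
      (tendsto_atBot_add_const_right _ _ (tendsto_intCast_atBot_iff.2 tendsto_id))).comp_injective
      Nat.cast_injective
  have hcover : Ici (0 : ℝ) ⊆ ⋃ n : ℕ, Icc (n : ℝ) (n + 1) := fun s hs =>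
    mem_iUnion.2 ⟨⌊s⌋₊, Nat.floor_le hs, (Nat.lt_floor_add_one s).le⟩
  refine (hlf.continuousOn_iUnion (fun _ => isClosed_Icc) fun n => ?_).mono hcover
  exact ((γ n).continuous_extend.comp (continuous_sub_right _)).continuousOn.congr
    (eqOn_concatSeq γ n)

variable {g : ℝ → X} {p : X}

noncomputable def ofTendstoAtTop (hg : ContinuousOn g (Ici 1)) (hp : Tendsto g atTop (𝓝 p)) :
    Path (g 1) p where
  toFun t := if (t : ℝ) < 1 then g (1 - t)⁻¹ else p
  continuous_toFun := (continuousOn_Icc_of_tendsto_atTop hg hp).comp_continuous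
    continuous_subtype_val Subtype.prop
  source' := by simp
  target' := by simp

theorem ofTendstoAtTop_apply_of_lt (hg : ContinuousOn g (Ici 1)) (hp : Tendsto g atTop (𝓝 p))
    {t : I} (ht : (t : ℝ) < 1) : ofTendstoAtTop hg hp t = g (1 - t)⁻¹ :=
  if_pos ht

end TopologicalSpace

theorem tendsto_concatSeq_atTop {X : Type*} [PseudoMetricSpace X] {u : ℕ → X}
    (γ : ∀ n, Path (u n) (u (n + 1))) {p : X}
    (hγ : Tendsto (fun n => (γ n : C(I, X))) atTop (𝓝 (ContinuousMap.const I p))) :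
    Tendsto (concatSeq γ) atTop (𝓝 p) := by
  refine tendsto_iff_dist_tendsto_zero.2 (squeeze_zero (fun _ => dist_nonneg) (fun s => ?_)
    (tendsto_iff_dist_tendsto_zero.1 (hγ.comp tendsto_nat_floor_atTop)))
  exact ContinuousMap.dist_apply_le_dist (f := (γ ⌊s⌋₊ : C(I, X)))
    (g := ContinuousMap.const I p) (projIcc 0 1 zero_le_one (s - ⌊s⌋₊))

end Path

theorem exists_path_through_convergent_sequence_general
    (X : Type*) [MetricSpace X] [CompactSpace X] [ConnectedSpace X]
    [LocallyPathConnectedSpace X]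
    (u : ℕ → X) (p : X) (hu : Filter.Tendsto u Filter.atTop (nhds p)) :
    ∃ T : Path (u 1) p, ∀ n : ℕ, 1 ≤ n → T (seqPoint n) = u n := by
  have := pathConnectedSpace_iff_connectedSpace.2 ‹ConnectedSpace X›
  obtain ⟨γ, hγ⟩ := exists_paths_tendsto_const hu
  have hcont := (Path.continuousOn_concatSeq γ).mono (Ici_subset_Ici.2 zero_le_one)
  have hstart : Path.concatSeq γ 1 = u 1 := by exact_mod_cast Path.concatSeq_natCast γ 1
  refine ⟨(Path.ofTendstoAtTop hcont (Path.tendsto_concatSeq_atTop γ hγ)).cast hstart.symm rfl,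
    fun n hn => ?_⟩
  have hn' : (0 : ℝ) < n := by exact_mod_cast hn
  have hlt : (seqPoint n : ℝ) < 1 := sub_lt_self 1 (one_div_pos.2 hn')
  rw [Path.cast_coe, Path.ofTendstoAtTop_apply_of_lt _ _ hlt]
  simpa [seqPoint] using Path.concatSeq_natCast γ n

/-- Lemma `alem3`: in a Peano continuum, a convergent sequence `xₙ → x` can be threaded by a
path `T` with `T(0) = x₁`, `T(1) = x` and `T(1 - 1/n) = xₙ` for all `n ≥ 1`. -/
theorem exists_path_through_convergent_sequence
    (X : Type*) [MetricSpace X] [Nonempty X] [CompactSpace X] [ConnectedSpace X]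
    [LocallyPathConnectedSpace X]
    (u : ℕ → X) (p : X) (hu : Filter.Tendsto u Filter.atTop (nhds p)) :
    ∃ T : Path (u 1) p, ∀ n : ℕ, 1 ≤ n → T (seqPoint n) = u n :=
  exists_path_through_convergent_sequence_general X u p hu
end
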